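/- arXiv:2311.01440 — 2 statements merged into one kernel-verified Lean document; each statement's English description precedes it below -/
import Mathlib

section
/- Let A and σ be n×n real matrices satisfying the Kalman rank condition. Then for every t > 0 the covariance matrix Σ_t := ∫₀^t e^{(t−s)A} σ σᵀ e^{(t−s)Aᵀ} ds is invertible (equivalently, positive definite). -/
/- Setting: n×n real matrices A, σ; SDE dx = Ax dt + σ dB on ℝⁿ. -/

open MeasureTheory Matrix

noncomputable section

abbrev Vec (n : ℕ) := Fin n → ℝ
abbrev Mat (n : ℕ) := Matrix (Fin n) (Fin n) ℝ

/-- matrix exponential e^M -/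
def mexp {n : ℕ} (M : Mat n) : Mat n := NormedSpace.exp M

/-- The n×n² Kalman block matrix [σ, Aσ, A²σ, …, A^{n-1}σ]. -/
def kalmanMatrix {n : ℕ} (A σ : Mat n) : Matrix (Fin n) (Fin n × Fin n) ℝ :=
  Matrix.of fun i p => (A ^ (p.1 : ℕ) * σ) i p.2

/-- The Kalman rank condition: rank [σ, Aσ, …, A^{n-1}σ] = n. -/
def KalmanRank {n : ℕ} (A σ : Mat n) : Prop := (kalmanMatrix A σ).rank = n

/-- Σ_t = ∫₀ᵗ e^{(t-s)A} σσᵀ e^{(t-s)Aᵀ} ds, the integral taken entrywise. -/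
def SigmaMat {n : ℕ} (A σ : Mat n) (t : ℝ) : Mat n :=
  Matrix.of fun i j =>
    ∫ s in (0:ℝ)..t, (mexp ((t - s) • A) * (σ * σᵀ) * mexp ((t - s) • Aᵀ)) i j

open Classical in
/-- The positive semidefinite square root of a PSD matrix (junk value 0 otherwise). -/
def psdSqrt {n : ℕ} (M : Mat n) : Mat n := if h : M.PosSemidef then
    (h.1.eigenvectorUnitary : Mat n) *
      diagonal (RCLike.ofReal ∘ Real.sqrt ∘ h.1.eigenvalues) *
      (star h.1.eigenvectorUnitary : Mat n) else 0

/-- standard Gaussian measure on ℝⁿ -/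
def stdGaussian (n : ℕ) : Measure (Vec n) :=
  Measure.pi fun _ => ProbabilityTheory.gaussianReal 0 1

/-- The Markov semigroup: P_t f(x) = 𝔼[f(e^{tA}x + Σ_t^{1/2} Z)], Z standard Gaussian. -/
def Pt {n : ℕ} (A σ : Mat n) (t : ℝ) (f : Vec n → ℝ) (x : Vec n) : ℝ :=
  ∫ z, f (mexp (t • A) *ᵥ x + psdSqrt (SigmaMat A σ t) *ᵥ z) ∂(stdGaussian n)

/-- partial derivative ∂_i f(x) -/
def pd {n : ℕ} (i : Fin n) (f : Vec n → ℝ) (x : Vec n) : ℝ := fderiv ℝ f x (Pi.single i 1)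

/-- gradient ∇f(x) -/
def gradV {n : ℕ} (f : Vec n → ℝ) (x : Vec n) : Vec n := fun i => pd i f x

/-- Γ^G(f,g)(x) = ⟨G∇f(x), ∇g(x)⟩ -/
def GammaOp {n : ℕ} (G : Mat n) (f g : Vec n → ℝ) (x : Vec n) : ℝ :=
  (G *ᵥ gradV f x) ⬝ᵥ gradV g x

/-- The generator L f(x) = ⟨Ax, ∇f(x)⟩ + ½ Σᵢⱼ (σσᵀ)ᵢⱼ ∂ᵢ∂ⱼ f(x). -/
def Lop {n : ℕ} (A σ : Mat n) (f : Vec n → ℝ) (x : Vec n) : ℝ :=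
  (A *ᵥ x) ⬝ᵥ gradV f x + (1/2) * ∑ i, ∑ j, (σ * σᵀ) i j * pd i (pd j f) x

/-- Γ₂^G(f) = ½ L Γ^G(f) − Γ^G(f, Lf). -/
def Gamma2Op {n : ℕ} (A σ G : Mat n) (f : Vec n → ℝ) (x : Vec n) : ℝ :=
  (1/2) * Lop A σ (GammaOp G f f) x - GammaOp G f (Lop A σ f) x

/-- G_t = ∫₀ᵗ e^{-vA} σσᵀ e^{-vAᵀ} dv, entrywise. -/
def Gt {n : ℕ} (A σ : Mat n) (t : ℝ) : Mat n :=
  Matrix.of fun i j => ∫ v in (0:ℝ)..t, (mexp ((-v) • A) * (σ * σᵀ) * mexp ((-v) • Aᵀ)) i j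

/-- control distance ρ_t(x,y) = √⟨G_t⁻¹(x−y), x−y⟩ -/
def rhoT {n : ℕ} (A σ : Mat n) (t : ℝ) (x y : Vec n) : ℝ :=
  Real.sqrt (((Gt A σ t)⁻¹ *ᵥ (x - y)) ⬝ᵥ (x - y))

/-
Writing `P s = e^{(t-s)A} σ`, the integrand is `P s (P s)ᵀ`, so `xᵀ Σ_t x = ∫₀ᵗ |(P s)ᵀ x|² ds`.
If this vanishes for some `x`, the continuous curve `v ↦ σᵀ e^{vAᵀ} x` vanishes on `(0, t)`, hence
so do all its derivatives `σᵀ (Aᵀ)ᵏ e^{vAᵀ} x`. At `v = t/2` this says that `e^{(t/2)Aᵀ} x` is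
orthogonal to every column of the Kalman matrix, which has full row rank; so `e^{(t/2)Aᵀ} x = 0`,
and `x = 0` because the exponential is invertible.
-/

open Set Filter Topology

section Gramian

variable {ι κ : Type*} [Fintype ι] [Fintype κ]

lemma dotProduct_mulVec_intervalIntegral {M : ℝ → Matrix ι ι ℝ} {a b : ℝ}
    (hM : ∀ i j, IntervalIntegrable (fun s => M s i j) volume a b) (x : ι → ℝ) :
    x ⬝ᵥ (Matrix.of (fun i j => ∫ s in a..b, M s i j) *ᵥ x)
      = ∫ s in a..b, x ⬝ᵥ (M s *ᵥ x) := by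
  have hM' : ∀ i j, IntervalIntegrable (fun s => x i * (M s i j * x j)) volume a b :=
    fun i j => ((hM i j).mul_const _).const_mul _
  simp only [dotProduct, mulVec, of_apply, Finset.mul_sum]
  rw [intervalIntegral.integral_finsetSum fun i _ => by
    simpa only [← Finset.sum_fn] using IntervalIntegrable.sum _ fun j _ => hM' i j]
  refine Finset.sum_congr rfl fun i _ => ?_
  rw [intervalIntegral.integral_finsetSum fun j _ => hM' i j]
  simp only [intervalIntegral.integral_const_mul, intervalIntegral.integral_mul_const]

lemma eqOn_zero_of_intervalIntegral_eq_zero {f : ℝ → ℝ} {a b : ℝ} (hab : a ≤ b)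
    (hf : Continuous f) (hf0 : 0 ≤ f) (h : ∫ s in a..b, f s = 0) : EqOn f 0 (Ioo a b) := by
  rw [intervalIntegral.integral_eq_zero_iff_of_le_of_nonneg_ae hab
    (Eventually.of_forall hf0) (hf.intervalIntegrable a b)] at h
  exact Measure.eqOn_open_of_ae_eq (ae_restrict_of_ae_restrict_of_subset Ioo_subset_Ioc_self h)
    isOpen_Ioo hf.continuousOn continuousOn_const

omit [Fintype ι] in
theorem isHermitian_intervalIntegral_mul_transpose (P : ℝ → Matrix ι κ ℝ) (a b : ℝ) :
    (Matrix.of fun i j => ∫ s in a..b, (P s * (P s)ᵀ) i j).IsHermitian := by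
  ext i j
  simp only [conjTranspose_apply, of_apply, star_trivial]
  congr 1 with s
  rw [← transpose_apply (P s * (P s)ᵀ), transpose_mul, transpose_transpose]

theorem posDef_intervalIntegral_mul_transpose {P : ℝ → Matrix ι κ ℝ} (hP : Continuous P)
    {a b : ℝ} (hab : a ≤ b) (hobs : ∀ x, (∀ s ∈ Ioo a b, (P s)ᵀ *ᵥ x = 0) → x = 0) :
    (Matrix.of fun i j => ∫ s in a..b, (P s * (P s)ᵀ) i j).PosDef := by
  have hPx : ∀ x, Continuous fun s => (P s)ᵀ *ᵥ x := fun x =>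
    hP.matrix_transpose.matrix_mulVec continuous_const
  have hquad : ∀ x s, x ⬝ᵥ ((P s * (P s)ᵀ) *ᵥ x) = (P s)ᵀ *ᵥ x ⬝ᵥ (P s)ᵀ *ᵥ x := fun x s => by
    rw [← mulVec_mulVec, dotProduct_mulVec, ← mulVec_transpose]
  refine posDef_iff_dotProduct_mulVec.mpr ⟨isHermitian_intervalIntegral_mul_transpose P a b,
    fun x hx => ?_⟩
  have hint : ∀ i j, IntervalIntegrable (fun s => (P s * (P s)ᵀ) i j) volume a b := fun i j =>
    ((hP.matrix_mul hP.matrix_transpose).matrix_elem i j).intervalIntegrable a b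
  rw [star_trivial, dotProduct_mulVec_intervalIntegral hint]
  simp only [hquad]
  refine (intervalIntegral.integral_nonneg hab fun s _ => dotProduct_self_star_nonneg _).lt_of_ne
    fun h0 => hx (hobs x fun s hs => ?_)
  have := eqOn_zero_of_intervalIntegral_eq_zero hab ((hPx x).dotProduct (hPx x))
    (fun s => dotProduct_self_star_nonneg _) h0.symm hs
  exact dotProduct_self_eq_zero.mp this

end Gramian

theorem Matrix.vecMul_injective_of_rank_eq {m p R : Type*} [Fintype m] [Fintype p] [Field R]
    {K : Matrix m p R} (hK : K.rank = Fintype.card m) : Function.Injective K.vecMul := by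
  rw [vecMul_injective_iff, linearIndependent_iff_card_eq_finrank_span, ← hK,
    rank_eq_finrank_span_row]
  rfl

section Kalman

variable {n : ℕ}

lemma eq_zero_of_kalmanRank {A σ : Mat n} (hK : KalmanRank A σ) {y : Vec n}
    (hy : ∀ k : ℕ, (A ^ k * σ)ᵀ *ᵥ y = 0) : y = 0 := by
  have hinj := Matrix.vecMul_injective_of_rank_eq (K := kalmanMatrix A σ)
    (by rw [Fintype.card_fin]; exact hK)
  have hyK : y ᵥ* kalmanMatrix A σ = 0 := funext fun p => by
    have := congrFun (hy p.1) p.2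
    rwa [mulVec_transpose] at this
  exact hinj (hyK.trans (zero_vecMul _).symm)

section Exponential

-- Any norm inducing the product topology will do; none appears in the statements below.
attribute [local instance] Matrix.linftyOpNormedRing Matrix.linftyOpNormedAlgebra

lemma continuous_mexp : Continuous (mexp : Mat n → Mat n) :=
  NormedSpace.exp_continuous

lemma mexp_transpose (M : Mat n) : mexp Mᵀ = (mexp M)ᵀ :=
  Matrix.exp_transpose M

lemma isUnit_mexp (M : Mat n) : IsUnit (mexp M) :=
  Matrix.isUnit_exp M

lemma hasDerivAt_mul_mexp_smul_mulVec (C B : Mat n) (x : Vec n) (u : ℝ) :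
    HasDerivAt (fun v : ℝ => (C * mexp (v • B)) *ᵥ x) ((C * B * mexp (u • B)) *ᵥ x) u := by
  have hCexp := (hasDerivAt_exp_smul_const' B u).const_mul C
  let L := LinearMap.toContinuousLinearMap ((mulVecBilin ℝ ℝ (m := Fin n)).flip x)
  rw [mul_assoc]
  exact L.hasFDerivAt.comp_hasDerivAt u hCexp

lemma eventually_mul_pow_mul_mexp_smul_mulVec_eq_zero {C B : Mat n} {x : Vec n} {u : ℝ}
    (h : ∀ᶠ v in 𝓝 u, (C * mexp (v • B)) *ᵥ x = 0) (k : ℕ) :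
    ∀ᶠ v in 𝓝 u, (C * B ^ k * mexp (v • B)) *ᵥ x = 0 := by
  induction k with
  | zero => simpa using h
  | succ k ih =>
    filter_upwards [ih.eventually_nhds] with v hv
    have h0 : HasDerivAt (fun v : ℝ => (C * B ^ k * mexp (v • B)) *ᵥ x) 0 v :=
      (hasDerivAt_const v 0).congr_of_eventuallyEq hv
    rw [pow_succ, ← mul_assoc]
    exact (hasDerivAt_mul_mexp_smul_mulVec _ B x v).unique h0

end Exponential

lemma eq_zero_of_kalmanRank_of_eventually {A σ : Mat n} (hK : KalmanRank A σ) {x : Vec n} {u : ℝ}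
    (h : ∀ᶠ v in 𝓝 u, (σᵀ * mexp (v • Aᵀ)) *ᵥ x = 0) : x = 0 := by
  have hy : mexp (u • Aᵀ) *ᵥ x = 0 := by
    refine eq_zero_of_kalmanRank hK fun k => ?_
    rw [mulVec_mulVec, transpose_mul, transpose_pow]
    exact (eventually_mul_pow_mul_mexp_smul_mulVec_eq_zero h k).self_of_nhds
  exact (mulVec_injective_iff_isUnit.mpr (isUnit_mexp _)) (hy.trans (mulVec_zero _).symm)

lemma mexp_smul_mul_mul_transpose (A σ : Mat n) (u : ℝ) :
    mexp (u • A) * (σ * σᵀ) * mexp (u • Aᵀ) = (mexp (u • A) * σ) * (mexp (u • A) * σ)ᵀ := by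
  rw [← transpose_smul, mexp_transpose, transpose_mul]
  simp only [mul_assoc]

lemma sigmaMat_eq (A σ : Mat n) (t : ℝ) :
    SigmaMat A σ t = Matrix.of fun i j =>
      ∫ s in (0:ℝ)..t, ((mexp ((t - s) • A) * σ) * (mexp ((t - s) • A) * σ)ᵀ) i j := by
  simp only [SigmaMat, mexp_smul_mul_mul_transpose]

end Kalman

/-- Under the Kalman rank condition, the covariance matrix
Σ_t = ∫₀ᵗ e^{(t−s)A} σσᵀ e^{(t−s)Aᵀ} ds is positive definite (hence invertible)
for every t > 0. -/
theorem stmt_0 {n : ℕ} (A σ : Mat n) (hK : KalmanRank A σ) (t : ℝ) (ht : 0 < t) :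
    (SigmaMat A σ t).PosDef ∧ IsUnit (SigmaMat A σ t) := by
  have hP : Continuous fun s : ℝ => mexp ((t - s) • A) * σ :=
    (continuous_mexp.comp ((continuous_const.sub continuous_id).smul continuous_const)).matrix_mul
      continuous_const
  have hpd : (SigmaMat A σ t).PosDef := by
    rw [sigmaMat_eq]
    refine posDef_intervalIntegral_mul_transpose hP ht.le fun x hx =>
      eq_zero_of_kalmanRank_of_eventually hK (u := t / 2) ?_
    filter_upwards [Ioo_mem_nhds (half_pos ht) (half_lt_self ht)] with v hv
    have := hx (t - v) ⟨by linarith [hv.2], by linarith [hv.1]⟩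
    rwa [sub_sub_cancel, transpose_mul, ← mexp_transpose, transpose_smul] at this
  exact ⟨hpd, hpd.isUnit⟩
end
end

section
/- (Linear kinetic Fokker–Planck, large friction.) For γ > 0 let A̲ := [[0,1],[−1,−γ]] and σ̲ := [[0,0],[0,√γ]] (2×2 real matrices), and let λ̲(2,t) := inf_{‖x‖_{ℝ²}=1} ⟨G̲_t x, x⟩ where G̲_t := ∫₀^t e^{−v A̲} σ̲ σ̲ᵀ e^{−v A̲ᵀ} dv. Then there exists γ_L > 2 such that for all γ ≥ γ_L and all t* ≥ 1: λ̲(2, t* γ) ≥ e^{t*}/16. -/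
open MeasureTheory Matrix Kronecker

noncomputable section

/-- matrix exponential e^M -/
def mexpG {m : Type*} [Fintype m] [DecidableEq m] (M : Matrix m m ℝ) : Matrix m m ℝ :=
  NormedSpace.exp M

open Classical in
/-- The positive semidefinite square root of a PSD matrix (junk value 0 otherwise). -/
def psdSqrtG {m : Type*} [Fintype m] [DecidableEq m] (M : Matrix m m ℝ) : Matrix m m ℝ :=
  if h : M.PosSemidef then h.1.eigenvectorUnitary.1 * diagonal ((↑) ∘ Real.sqrt ∘ h.1.eigenvalues) *
      (star h.1.eigenvectorUnitary : Matrix m m ℝ) else 0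

/-- G_t = ∫₀ᵗ e^{−vA} σσᵀ e^{−vAᵀ} dv, entrywise. -/
def GtG {m : Type*} [Fintype m] [DecidableEq m] (A σ : Matrix m m ℝ) (t : ℝ) : Matrix m m ℝ :=
  Matrix.of fun i j => ∫ v in (0:ℝ)..t, (mexpG ((-v) • A) * (σ * σᵀ) * mexpG ((-v) • Aᵀ)) i j

/-- Σ_t = ∫₀ᵗ e^{(t−s)A} σσᵀ e^{(t−s)Aᵀ} ds, entrywise. -/
def SigmaG {m : Type*} [Fintype m] [DecidableEq m] (A σ : Matrix m m ℝ) (t : ℝ) : Matrix m m ℝ :=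
  Matrix.of fun i j => ∫ s in (0:ℝ)..t, (mexpG ((t - s) • A) * (σ * σᵀ) * mexpG ((t - s) • Aᵀ)) i j

/-- standard Gaussian measure on (m → ℝ) -/
def stdGaussianG (m : Type*) [Fintype m] : Measure (m → ℝ) :=
  Measure.pi fun _ => ProbabilityTheory.gaussianReal 0 1

/-- The Markov semigroup: P_t f(x) = 𝔼[f(e^{tA}x + Σ_t^{1/2} Z)], Z standard Gaussian. -/
def PtG {m : Type*} [Fintype m] [DecidableEq m] (A σ : Matrix m m ℝ) (t : ℝ)
    (f : (m → ℝ) → ℝ) (x : m → ℝ) : ℝ :=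
  ∫ z, f (mexpG (t • A) *ᵥ x + psdSqrtG (SigmaG A σ t) *ᵥ z) ∂(stdGaussianG m)

/-- The underlying Kalman block matrix [σ̲, A̲σ̲, …, A̲^{j−1}σ̲]. -/
def kalmanU (j : ℕ) (Au σu : Matrix (Fin j) (Fin j) ℝ) : Matrix (Fin j) (Fin j × Fin j) ℝ :=
  Matrix.of fun i p => (Au ^ (p.1 : ℕ) * σu) i p.2

/-- λ̲(j,t) = inf_{‖z‖_{ℝʲ}=1} ⟨G̲_t z, z⟩. -/
def lamU (j : ℕ) (Au σu : Matrix (Fin j) (Fin j) ℝ) (t : ℝ) : ℝ :=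
  sInf { r : ℝ | ∃ z : Fin j → ℝ, z ⬝ᵥ z = 1 ∧ r = (GtG Au σu t *ᵥ z) ⬝ᵥ z }

/-!
Write `γ = r + s` with `r * s = 1`, `r < s`, so that `r ≈ 1/γ` and `s ≈ γ` are the eigenvalues
of `-A̲`. Diagonalising `A̲` gives `G̲_T = γ / (s - r)² • N K Nᵀ` with `N = !![1, -1; -r, s]` and
`K` the Gram matrix `K_kl = ∫₀ᵀ e^{(r_k + r_l) v} dv` of the two exponentials. A symmetric 2×2
matrix `M` satisfies `det M ‖w‖² ≤ trace M ⟨M w, w⟩` (the difference is a sum of two squares).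
Applied to `N Nᵀ` (determinant `(s - r)²`, trace `γ²`) and to `K`, this gives
`λ̲(2, T) ≥ det K / (γ trace K)`. For `T = t γ` the entries of `K` are explicit, and
`det K ≳ e^{2rT} e^{2sT}` while `γ trace K ≲ e^{-t} e^{2rT} e^{2sT}`, because `e^{2rT} ≥ e^{2t}`
and `e^{2sT} ≥ e^{γ² t}`.
-/

open Real

lemma mexpG_diagonal_two (x y : ℝ) :
    mexpG (diagonal ![x, y]) = !![exp x, 0; 0, exp y] := by
  have h : NormedSpace.exp ![x, y] = ![exp x, exp y] := by
    funext i
    fin_cases i <;> simp [Pi.coe_exp, ← Real.exp_eq_exp_ℝ]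
  rw [mexpG, Matrix.exp_diagonal, h, diagonal_vec2]

-- Lemmas named `_kfp` concern `A̲` with `γ = r + s`, `r * s = 1`; its eigenvectors for the
-- eigenvalues `-r`, `-s` are `(1, -r)` and `(1, -s)`, the columns of `P` below.
lemma mexpG_neg_smul_kfp {r s : ℝ} (hrs : r ≠ s) (hprod : r * s = 1) (v : ℝ) :
    mexpG ((-v) • !![0, 1; -1, -(r + s)]) =
      !![(s * exp (r * v) - r * exp (s * v)) / (s - r), (exp (r * v) - exp (s * v)) / (s - r);
        (exp (s * v) - exp (r * v)) / (s - r), (s * exp (s * v) - r * exp (r * v)) / (s - r)] := by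
  have hsr : s - r ≠ 0 := sub_ne_zero.2 hrs.symm
  set P : Matrix (Fin 2) (Fin 2) ℝ := !![1, 1; -r, -s]
  have hP : P⁻¹ = !![s / (s - r), 1 / (s - r); -r / (s - r), -1 / (s - r)] := by
    refine Matrix.inv_eq_right_inv ?_
    rw [mul_fin_two, one_fin_two]
    simp only [EmbeddingLike.apply_eq_iff_eq, vecCons_inj, and_true]
    refine ⟨⟨?_, ?_⟩, ?_, ?_⟩ <;> field_simp <;> ring
  have hPu : IsUnit P := by
    rw [Matrix.isUnit_iff_isUnit_det, Matrix.det_fin_two_of, isUnit_iff_ne_zero]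
    intro h; exact hsr (by linarith)
  have hconj : (-v) • !![0, 1; -1, -(r + s)] = P * diagonal ![r * v, s * v] * P⁻¹ := by
    rw [hP, diagonal_vec2, mul_fin_two, mul_fin_two, smul_of]
    simp only [smul_cons, smul_empty, smul_eq_mul, EmbeddingLike.apply_eq_iff_eq, vecCons_inj,
      and_true]
    refine ⟨⟨?_, ?_⟩, ?_, ?_⟩ <;> field_simp <;> grind
  rw [hconj, mexpG, Matrix.exp_conj _ _ hPu, ← mexpG, mexpG_diagonal_two, hP, mul_fin_two,
    mul_fin_two]
  simp only [EmbeddingLike.apply_eq_iff_eq, vecCons_inj, and_true]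
  refine ⟨⟨?_, ?_⟩, ?_, ?_⟩ <;> field_simp <;> grind

lemma mexpG_transpose {m : Type*} [Fintype m] [DecidableEq m] (M : Matrix m m ℝ) :
    mexpG Mᵀ = (mexpG M)ᵀ :=
  Matrix.exp_transpose M

def expGram {ι : Type*} (r : ι → ℝ) (T : ℝ) : Matrix ι ι ℝ :=
  of fun k l => ∫ v in (0:ℝ)..T, exp ((r k + r l) * v)

lemma integral_mulVec_exp_mul_mulVec_exp {κ ι : Type*} [Fintype ι] (N : Matrix κ ι ℝ)
    (r : ι → ℝ) (T : ℝ) (i j : κ) :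
    ∫ v in (0:ℝ)..T, (N *ᵥ fun k => exp (r k * v)) i * (N *ᵥ fun k => exp (r k * v)) j =
      (N * expGram r T * Nᵀ) i j := by
  have hint : ∀ k l, IntervalIntegrable (fun v => N i k * N j l * exp ((r k + r l) * v))
      volume 0 T := fun k l => (by fun_prop : Continuous _).intervalIntegrable _ _
  have hexpand : ∀ v, (N *ᵥ fun k => exp (r k * v)) i * (N *ᵥ fun k => exp (r k * v)) j =
      ∑ k, ∑ l, N i k * N j l * exp ((r k + r l) * v) := fun v => by
    simp only [mulVec, dotProduct, Finset.sum_mul_sum, add_mul, exp_add]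
    exact Finset.sum_congr rfl fun _ _ => Finset.sum_congr rfl fun _ _ => by ring
  rw [Matrix.mul_assoc]
  simp only [hexpand, mul_apply, expGram, of_apply, transpose_apply, Finset.mul_sum]
  rw [intervalIntegral.integral_finsetSum fun k _ => ?_]
  · refine Finset.sum_congr rfl fun k _ => ?_
    rw [intervalIntegral.integral_finsetSum fun l _ => hint k l]
    refine Finset.sum_congr rfl fun l _ => ?_
    rw [intervalIntegral.integral_const_mul]
    ring
  · simpa only [Finset.sum_fn] using IntervalIntegrable.sum _ fun l _ => hint k l

lemma expGram_isSymm {ι : Type*} (r : ι → ℝ) (T : ℝ) : (expGram r T).IsSymm := by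
  ext k l
  simp only [expGram, transpose_apply, of_apply, add_comm]

lemma GtG_kfp {r s : ℝ} (hrs : r ≠ s) (hprod : r * s = 1) (hpos : 0 ≤ r + s) (T : ℝ) :
    GtG !![0, 1; -1, -(r + s)] !![0, 0; 0, √(r + s)] T =
      ((r + s) / (s - r) ^ 2) • (!![1, -1; -r, s] * expGram ![r, s] T * !![1, -1; -r, s]ᵀ) := by
  have hsr : s - r ≠ 0 := sub_ne_zero.2 hrs.symm
  have hintegrand : ∀ v (i j : Fin 2),
      (mexpG ((-v) • !![0, 1; -1, -(r + s)]) * (!![0, 0; 0, √(r + s)] * !![0, 0; 0, √(r + s)]ᵀ) *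
        mexpG ((-v) • !![0, 1; -1, -(r + s)]ᵀ)) i j =
      (r + s) / (s - r) ^ 2 * ((!![1, -1; -r, s] *ᵥ fun k => exp (![r, s] k * v)) i *
        (!![1, -1; -r, s] *ᵥ fun k => exp (![r, s] k * v)) j) := by
    intro v i j
    have hσσ : !![0, 0; 0, √(r + s)] * !![0, 0; 0, √(r + s)]ᵀ = !![0, 0; 0, r + s] := by
      ext k l
      fin_cases k <;> fin_cases l <;> simp [mul_apply, Fin.sum_univ_two, Real.mul_self_sqrt hpos]
    rw [← transpose_smul, mexpG_transpose, mexpG_neg_smul_kfp hrs hprod, hσσ]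
    fin_cases i <;> fin_cases j <;>
      simp [mul_apply, Fin.sum_univ_two, mulVec, dotProduct] <;> field_simp <;> ring
  ext i j
  simp only [GtG, of_apply, hintegrand, intervalIntegral.integral_const_mul,
    integral_mulVec_exp_mul_mulVec_exp, Matrix.smul_apply, smul_eq_mul]

lemma Matrix.IsSymm.det_mul_dotProduct_self_le_fin_two {K : Matrix (Fin 2) (Fin 2) ℝ}
    (hK : K.IsSymm) (w : Fin 2 → ℝ) : K.det * (w ⬝ᵥ w) ≤ K.trace * (K *ᵥ w ⬝ᵥ w) := by
  have h10 : K 1 0 = K 0 1 := by simpa using congr_fun₂ hK 0 1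
  simp only [det_fin_two, trace_fin_two, h10, mulVec, dotProduct, Fin.sum_univ_two]
  nlinarith [sq_nonneg (K 0 0 * w 0 + K 0 1 * w 1), sq_nonneg (K 0 1 * w 0 + K 1 1 * w 1)]

lemma Matrix.mul_mul_transpose_mulVec_dotProduct {m n R : Type*} [Fintype m] [Fintype n]
    [CommSemiring R] (N : Matrix m n R) (K : Matrix n n R) (z : m → R) :
    (N * K * Nᵀ) *ᵥ z ⬝ᵥ z = K *ᵥ (Nᵀ *ᵥ z) ⬝ᵥ Nᵀ *ᵥ z := by
  rw [← mulVec_mulVec, ← mulVec_mulVec, dotProduct_comm, dotProduct_mulVec, ← mulVec_transpose,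
    dotProduct_comm]

lemma det_expGram_le_trace_mul_GtG_kfp {r s : ℝ} (hr : 0 < r) (hrs : r < s) (hprod : r * s = 1)
    (T : ℝ) (hdet : 0 ≤ (expGram ![r, s] T).det) (z : Fin 2 → ℝ) (hz : z ⬝ᵥ z = 1) :
    (expGram ![r, s] T).det ≤ (r + s) * (expGram ![r, s] T).trace *
      (GtG !![0, 1; -1, -(r + s)] !![0, 0; 0, √(r + s)] T *ᵥ z ⬝ᵥ z) := by
  set N : Matrix (Fin 2) (Fin 2) ℝ := !![1, -1; -r, s]
  set K := expGram ![r, s] T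
  set w := Nᵀ *ᵥ z
  have hsr : 0 < s - r := sub_pos.2 hrs
  have hG : GtG !![0, 1; -1, -(r + s)] !![0, 0; 0, √(r + s)] T *ᵥ z ⬝ᵥ z =
      (r + s) / (s - r) ^ 2 * (K *ᵥ w ⬝ᵥ w) := by
    rw [GtG_kfp hrs.ne hprod (by linarith), smul_mulVec, smul_dotProduct,
      mul_mul_transpose_mulVec_dotProduct, smul_eq_mul]
  have hK := (expGram_isSymm ![r, s] T).det_mul_dotProduct_self_le_fin_two w
  have hw : (s - r) ^ 2 ≤ (r + s) ^ 2 * (w ⬝ᵥ w) := by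
    have h := (isSymm_mul_transpose_self N).det_mul_dotProduct_self_le_fin_two z
    have hNN := mul_mul_transpose_mulVec_dotProduct N 1 z
    rw [Matrix.mul_one, one_mulVec] at hNN
    rw [hNN, hz] at h
    convert h using 2
    · rw [det_mul, det_transpose, det_fin_two_of]; ring
    · simp [N, trace_fin_two, vecMul, dotProduct, Fin.sum_univ_two]; linear_combination 2 * hprod
  rw [hG]
  calc K.det = K.det * (s - r) ^ 2 / (s - r) ^ 2 := by field_simp
    _ ≤ K.det * ((r + s) ^ 2 * (w ⬝ᵥ w)) / (s - r) ^ 2 := by gcongr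
    _ = (r + s) ^ 2 * (K.det * (w ⬝ᵥ w)) / (s - r) ^ 2 := by ring
    _ ≤ (r + s) ^ 2 * (K.trace * (K *ᵥ w ⬝ᵥ w)) / (s - r) ^ 2 := by gcongr
    _ = (r + s) * K.trace * ((r + s) / (s - r) ^ 2 * (K *ᵥ w ⬝ᵥ w)) := by ring

def expIntegral (c T : ℝ) : ℝ := (exp (c * T) - 1) / c

lemma integral_exp_mul_eq_expIntegral {c : ℝ} (hc : c ≠ 0) (T : ℝ) :
    ∫ v in (0:ℝ)..T, exp (c * v) = expIntegral c T := by
  rw [intervalIntegral.integral_comp_mul_left (fun x => exp x) hc, integral_exp, expIntegral]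
  simp [div_eq_inv_mul]

lemma expIntegral_le {c : ℝ} (hc : 0 < c) (T : ℝ) : expIntegral c T ≤ exp (c * T) / c :=
  div_le_div_of_nonneg_right (by linarith) hc.le

lemma le_expIntegral {c T : ℝ} (hc : 0 < c) (hcT : 2 ≤ c * T) :
    6 / 7 * (exp (c * T) / c) ≤ expIntegral c T := by
  have h7 : 7 ≤ exp (c * T) := by
    have : exp 1 ^ 2 ≤ exp (c * T) := by
      rw [← exp_nat_mul]; exact exp_le_exp.2 (by push_cast; linarith)
    nlinarith [exp_one_gt_d9]
  rw [expIntegral, ← mul_div_assoc]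
  gcongr
  linarith

lemma expIntegral_pos {c T : ℝ} (hc : 0 < c) (hT : 0 < T) : 0 < expIntegral c T :=
  div_pos (sub_pos.2 (one_lt_exp_iff.2 (mul_pos hc hT))) hc

lemma expGram_apply {ι : Type*} {r : ι → ℝ} {k l : ι} (h : r k + r l ≠ 0) (T : ℝ) :
    expGram r T k l = expIntegral (r k + r l) T :=
  integral_exp_mul_eq_expIntegral h T

lemma expGram_fin_two {a b : ℝ} (ha : 0 < a) (hb : 0 < b) (T : ℝ) :
    expGram ![a, b] T =
      !![expIntegral (2 * a) T, expIntegral (a + b) T;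
        expIntegral (a + b) T, expIntegral (2 * b) T] := by
  have hr : ∀ k, 0 < ![a, b] k := Fin.forall_fin_two.2 ⟨ha, hb⟩
  rw [eta_fin_two (expGram ![a, b] T)]
  simp only [expGram_apply (add_pos (hr _) (hr _)).ne', cons_val_zero, cons_val_one, ← two_mul,
    add_comm b a]

lemma trace_expGram_pos {a b T : ℝ} (ha : 0 < a) (hb : 0 < b) (hT : 0 < T) :
    0 < (expGram ![a, b] T).trace := by
  rw [expGram_fin_two ha hb, trace_fin_two_of]
  exact add_pos (expIntegral_pos (by positivity) hT) (expIntegral_pos (by positivity) hT)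

lemma two_div_twentyFive_mul_le_det_kfp {r s T : ℝ} (hr : 0 < r) (hrs : r < s)
    (hprod : r * s = 1) (hγ : 10 ≤ r + s) (hT : r + s ≤ T) :
    2 / 25 * (exp (2 * r * T) * exp (2 * s * T)) ≤
      expIntegral (2 * r) T * expIntegral (2 * s) T - expIntegral (r + s) T ^ 2 := by
  have hs : 0 < s := by linarith
  have hrγ : r * (r + s) ≤ 2 := by nlinarith
  have hJ₁ : 3 / 14 * (r + s) * exp (2 * r * T) ≤ expIntegral (2 * r) T := by
    refine le_trans ?_ (le_expIntegral (by positivity) (by nlinarith))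
    rw [mul_div_assoc', le_div_iff₀ (by positivity)]
    nlinarith [exp_pos (2 * r * T)]
  have hJ₃ : 3 / 7 * exp (2 * s * T) / (r + s) ≤ expIntegral (2 * s) T := by
    refine le_trans ?_ (le_expIntegral (by positivity) (by nlinarith))
    rw [mul_div_assoc', div_le_div_iff₀ (by positivity) (by positivity)]
    nlinarith [exp_pos (2 * s * T)]
  have hJ₂ : ((r + s) * expIntegral (r + s) T) ^ 2 ≤ exp (2 * r * T) * exp (2 * s * T) := by
    have hE₂ : exp ((r + s) * T) ^ 2 = exp (2 * r * T) * exp (2 * s * T) := by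
      rw [sq, ← exp_add, ← exp_add]; ring_nf
    have hE₂1 : 1 ≤ exp ((r + s) * T) := one_le_exp (by nlinarith)
    rw [expIntegral, mul_div_cancel₀ _ (by positivity), ← hE₂]
    nlinarith
  have h13 : 9 / 98 * (exp (2 * r * T) * exp (2 * s * T)) ≤
      expIntegral (2 * r) T * expIntegral (2 * s) T := by
    refine le_trans (le_of_eq ?_) (mul_le_mul hJ₁ hJ₃ (by positivity) (hJ₁.trans' (by positivity)))
    field_simp
    ring
  nlinarith [mul_nonneg (by nlinarith : (0:ℝ) ≤ (r + s) ^ 2 - 100)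
    (sq_nonneg (expIntegral (r + s) T))]

lemma exp_mul_trace_kfp_le {r s t : ℝ} (hr : 0 < r) (hrs : r < s) (hprod : r * s = 1)
    (hγ : 10 ≤ r + s) (ht : 1 ≤ t) :
    exp t * (r + s) * (expIntegral (2 * r) (t * (r + s)) + expIntegral (2 * s) (t * (r + s))) ≤
      exp (2 * r * (t * (r + s))) * exp (2 * s * (t * (r + s))) := by
  have hs : 0 < s := by linarith
  set γ := r + s
  set T := t * γ
  set E₁ := exp (2 * r * T)
  set E₃ := exp (2 * s * T)
  have hrγ : 1 ≤ r * γ := by nlinarith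
  have h2s : 0 ≤ 2 * s - γ := by linarith
  have het : 2 ≤ exp t := by linarith [add_one_le_exp t]
  have hE₁ : 2 * exp t ≤ E₁ :=
    calc 2 * exp t ≤ exp t * exp t := by nlinarith
      _ = exp (2 * t) := by rw [← exp_add]; ring_nf
      _ ≤ E₁ := exp_le_exp.2 (by nlinarith)
  have hE₃ : exp t * γ ^ 2 ≤ E₃ :=
    calc exp t * γ ^ 2 ≤ exp t * exp ((γ ^ 2 - 1) * t) := by
          gcongr
          nlinarith [add_one_le_exp ((γ ^ 2 - 1) * t),
            mul_nonneg (by nlinarith : (0:ℝ) ≤ γ ^ 2 - 1) (by linarith : (0:ℝ) ≤ t - 1)]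
      _ = exp (γ ^ 2 * t) := by rw [← exp_add]; ring_nf
      _ ≤ E₃ := exp_le_exp.2 (by nlinarith [mul_nonneg h2s (by positivity : (0:ℝ) ≤ t * γ)])
  have hJ₁ : exp t * γ * expIntegral (2 * r) T ≤ E₁ * E₃ / 2 :=
    calc exp t * γ * expIntegral (2 * r) T ≤ exp t * γ * (E₁ / (2 * r)) := by
          gcongr; exact expIntegral_le (by positivity) T
      _ ≤ exp t * γ * (γ / 2 * E₁) := by
          gcongr
          rw [div_le_iff₀ (by positivity)]
          nlinarith [exp_pos (2 * r * T)]
      _ = exp t * γ ^ 2 * E₁ / 2 := by ring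
      _ ≤ E₁ * E₃ / 2 := by nlinarith [exp_pos (2 * r * T)]
  have hJ₃ : exp t * γ * expIntegral (2 * s) T ≤ E₁ * E₃ / 2 :=
    calc exp t * γ * expIntegral (2 * s) T ≤ exp t * γ * (E₃ / (2 * s)) := by
          gcongr; exact expIntegral_le (by positivity) T
      _ ≤ exp t * E₃ := by
          rw [mul_div_assoc', div_le_iff₀ (by positivity)]
          nlinarith [mul_nonneg h2s (by positivity : 0 ≤ exp t * E₃)]
      _ ≤ E₁ * E₃ / 2 := by nlinarith [exp_pos (2 * s * T)]
  linarith

lemma exp_mul_trace_expGram_le_det {r s t : ℝ} (hr : 0 < r) (hrs : r < s) (hprod : r * s = 1)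
    (hγ : 10 ≤ r + s) (ht : 1 ≤ t) :
    exp t * (r + s) * (expGram ![r, s] (t * (r + s))).trace ≤
      16 * (expGram ![r, s] (t * (r + s))).det := by
  rw [expGram_fin_two hr (hr.trans hrs), det_fin_two_of, trace_fin_two_of, ← sq]
  have htr := exp_mul_trace_kfp_le hr hrs hprod hγ ht
  have hdet :=
    two_div_twentyFive_mul_le_det_kfp hr hrs hprod hγ (by nlinarith : r + s ≤ t * (r + s))
  nlinarith [exp_pos (2 * r * (t * (r + s))), exp_pos (2 * s * (t * (r + s)))]

lemma exists_lt_mul_eq_one_add_eq {γ : ℝ} (hγ : 2 < γ) : ∃ r s, 0 < r ∧ r < s ∧ r * s = 1 ∧ r + s = γ := by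
  have hd : 0 < γ ^ 2 - 4 := by nlinarith
  have hsq := Real.sq_sqrt hd.le
  have hpos := Real.sqrt_pos.2 hd
  refine ⟨(γ - √(γ ^ 2 - 4)) / 2, (γ + √(γ ^ 2 - 4)) / 2, ?_, by linarith,
    by linear_combination (-1/4 : ℝ) * hsq, by ring⟩
  have : √(γ ^ 2 - 4) < γ := by nlinarith
  linarith

/-- linear kinetic Fokker–Planck, large friction: with
A̲ = [[0,1],[−1,−γ]] and σ̲ = [[0,0],[0,√γ]], there is γ_L > 2 such that
λ̲(2, t*γ) ≥ e^{t*}/16 for all γ ≥ γ_L and t* ≥ 1. -/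
theorem stmt_17 :
    ∃ γL : ℝ, 2 < γL ∧ ∀ γ : ℝ, γL ≤ γ → ∀ tstar : ℝ, 1 ≤ tstar →
      lamU 2 (!![0, 1; -1, -γ] : Matrix (Fin 2) (Fin 2) ℝ)
          (!![0, 0; 0, Real.sqrt γ] : Matrix (Fin 2) (Fin 2) ℝ) (tstar * γ)
        ≥ Real.exp tstar / 16 := by
  refine ⟨10, by norm_num, fun γ hγ t ht => ?_⟩
  obtain ⟨r, s, hr, hrs, hprod, rfl⟩ := exists_lt_mul_eq_one_add_eq (by linarith : 2 < γ)
  set K := expGram ![r, s] (t * (r + s))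
  have hest : exp t * (r + s) * K.trace ≤ 16 * K.det :=
    exp_mul_trace_expGram_le_det hr hrs hprod hγ ht
  have htr : 0 < (r + s) * K.trace :=
    mul_pos (by linarith) (trace_expGram_pos hr (hr.trans hrs) (by positivity))
  have hdet : 0 ≤ K.det := by nlinarith [exp_pos t]
  refine le_csInf ⟨_, ![1, 0], by simp [dotProduct], rfl⟩ ?_
  rintro _ ⟨z, hz, rfl⟩
  have hG := det_expGram_le_trace_mul_GtG_kfp hr hrs hprod _ hdet z hz
  rw [div_le_iff₀ (by norm_num)]
  refine le_of_mul_le_mul_right ?_ htr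
  linarith
end
end
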